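/- arXiv:2603.02136 — 7 statements merged into one kernel-verified Lean document; each statement's English description precedes it below -/
import Mathlib

section
/- If a team proposition P is convex, then every team T satisfying both ♦P (there is a nonempty S ⊆ T with S ∈ P) and P ⩒ P (there is S ⊇ T with S ∈ P) belongs to P. Conversely, if the empty team is not in P and every team satisfying both ♦P and P ⩒ P belongs to P, then P is convex. -/
/-- convexity implies ♦P ∩ (P ⩒ P) ⊆ P; conversely if ∅ ∉ P and
♦P ∩ (P ⩒ P) ⊆ P then P is convex. -/
theorem convex_iff_might_outer_disj {W : Type*} (P : Set (Set W)) :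
    ((∀ S T R : Set W, S ∈ P → T ∈ P → S ⊆ R → R ⊆ T → R ∈ P) →
      ∀ T : Set W, (∃ S : Set W, S ⊆ T ∧ S ≠ ∅ ∧ S ∈ P) →
        (∃ S : Set W, T ⊆ S ∧ (S ∈ P ∨ S ∈ P)) → T ∈ P) ∧
    ((∅ : Set W) ∉ P →
      (∀ T : Set W, (∃ S : Set W, S ⊆ T ∧ S ≠ ∅ ∧ S ∈ P) →
        (∃ S : Set W, T ⊆ S ∧ (S ∈ P ∨ S ∈ P)) → T ∈ P) →
      (∀ S T R : Set W, S ∈ P → T ∈ P → S ⊆ R → R ⊆ T → R ∈ P)) := by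
  constructor
  · rintro hconv T ⟨S, hST, _, hSP⟩ ⟨S', hTS', hS'⟩
    exact hconv S S' T hSP (hS'.elim id id) hST hTS'
  · intro hne h S T R hS hT hSR hRT
    have hSne : S ≠ ∅ := by rintro rfl; exact hne hS
    exact h R ⟨S, hSR, hSne, hS⟩ ⟨T, hRT, Or.inl hT⟩
end

section
/- If P is an upward closed team proposition and Q is an intersection closed team proposition, then P ↑→ Q is both upward closed and intersection closed. -/
/-- if P is upward closed and Q is intersection closed, then P ↑→ Q is
both upward closed and intersection closed. -/
theorem dual_implication_preserves_upward_intersection {W : Type*} (P Q : Set (Set W))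
    (hP : ∀ T ∈ P, ∀ S : Set W, T ⊆ S → S ∈ P)
    (hQ : ∀ R ∈ Q, ∀ S ∈ Q, R ∩ S ∈ Q) :
    (∀ T ∈ {T : Set W | ∀ S : Set W, T ⊆ S → S ∈ P → S ∈ Q},
       ∀ S : Set W, T ⊆ S → S ∈ {T : Set W | ∀ S : Set W, T ⊆ S → S ∈ P → S ∈ Q}) ∧
    (∀ R ∈ {T : Set W | ∀ S : Set W, T ⊆ S → S ∈ P → S ∈ Q},
       ∀ S ∈ {T : Set W | ∀ S : Set W, T ⊆ S → S ∈ P → S ∈ Q},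
       R ∩ S ∈ {T : Set W | ∀ S : Set W, T ⊆ S → S ∈ P → S ∈ Q}) := by
  constructor
  · intro T hT S hTS U hSU hU
    exact hT U (hTS.trans hSU) hU
  · intro R hR S hS U hU hUP
    have hRU : R ∪ U ∈ Q := hR (R ∪ U) Set.subset_union_left
      (hP U hUP _ Set.subset_union_right)
    have hSU : S ∪ U ∈ Q := hS (S ∪ U) Set.subset_union_left
      (hP U hUP _ Set.subset_union_right)
    have := hQ _ hRU _ hSU
    have heq : (R ∪ U) ∩ (S ∪ U) = U := by
      ext x
      constructor
      · rintro ⟨hr | hu, hs | hu2⟩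
        · exact hU ⟨hr, hs⟩
        · exact hu2
        · exact hu
        · exact hu
      · exact fun hx => ⟨Or.inr hx, Or.inr hx⟩
    rwa [heq] at this
end

section
/- If a team proposition P is not downward closed, then there exist downward closed (indeed flat) team propositions Q and R such that P ∩ (Q ∨ R) is not contained in (P ∩ Q) ∨ (P ∩ R). (One may take Q = 𝒫(S) and R = 𝒫(T \ S) where S ⊆ T, T ∈ P, S ∉ P.) -/
/-- if P is not downward closed, then there exist flat team propositions
Q and R witnessing a failure of distributivity. -/
theorem not_downward_closed_distributivity_fails {W : Type*} (P : Set (Set W))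
    (hP : ¬ (∀ T ∈ P, ∀ S : Set W, S ⊆ T → S ∈ P)) :
    ∃ Q R : Set (Set W),
      (∀ T : Set W, T ∈ Q ↔ ∀ w ∈ T, {w} ∈ Q) ∧
      (∀ T : Set W, T ∈ R ↔ ∀ w ∈ T, {w} ∈ R) ∧
      ¬ (P ∩ {T : Set W | ∃ T₁ T₂ : Set W, T = T₁ ∪ T₂ ∧ T₁ ∈ Q ∧ T₂ ∈ R} ⊆
         {T : Set W | ∃ T₁ T₂ : Set W, T = T₁ ∪ T₂ ∧ T₁ ∈ P ∩ Q ∧ T₂ ∈ P ∩ R}) := by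
  push_neg at hP
  obtain ⟨T, hT, S, hST, hSP⟩ := hP
  refine ⟨{U | U ⊆ S}, {U | U ⊆ T \ S}, ?_, ?_, ?_⟩
  · intro U
    constructor
    · intro h w hw _ hx; exact h (by simpa using hx ▸ hw)
    · intro h x hx; exact h x hx rfl
  · intro U
    constructor
    · intro h w hw _ hx; exact h (by simpa using hx ▸ hw)
    · intro h x hx; exact h x hx rfl
  · intro h
    have hmem : T ∈ P ∩ {U : Set W | ∃ T₁ T₂ : Set W, U = T₁ ∪ T₂ ∧ T₁ ∈ {U | U ⊆ S} ∧ T₂ ∈ {U | U ⊆ T \ S}} := by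
      refine ⟨hT, S, T \ S, ?_, Set.Subset.rfl, Set.Subset.rfl⟩
      rw [Set.union_diff_cancel hST]
    obtain ⟨T₁, T₂, hU, ⟨hT₁P, hT₁S⟩, _, hT₂⟩ := h hmem
    have : T₁ = S := by
      apply Set.Subset.antisymm hT₁S
      intro x hx
      have : x ∈ T := hST hx
      rw [hU] at this
      rcases this with h1 | h2
      · exact h1
      · exact absurd hx (hT₂ h2).2
    exact hSP (this ▸ hT₁P)
end

section
/- There is no binary operation c on team propositions such that: (i) c preserves union closure (if P and Q are union closed then c(P,Q) is union closed); (ii) Modus Ponens holds: P ∩ c(P,Q) ⊆ Q for all P, Q; and (iii) the Deduction Theorem holds: for all Γ, P, Q, if Γ ∩ P ⊆ Q then Γ ⊆ c(P,Q) — provided there exist union closed, empty-team-closed team propositions P, Q, R with P ∩ (Q ∨ R) ⊄ (P ∩ Q) ∨ (P ∩ R). -/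
variable {W : Type*}

/-- P is union closed. -/
def UnionClosed (P : Set (Set W)) : Prop := ∀ S T : Set W, S ∈ P → T ∈ P → S ∪ T ∈ P

/-- The tensor disjunction of team propositions. -/
def TensorDisj (P Q : Set (Set W)) : Set (Set W) :=
  {T | ∃ T₁ T₂ : Set W, T = T₁ ∪ T₂ ∧ T₁ ∈ P ∧ T₂ ∈ Q}

/-- no union-closure-preserving conditional with Modus Ponens and the
Deduction Theorem exists, provided distributivity fails for some union closed,
empty-team-closed P, Q, R. -/
theorem no_wellbehaved_conditional_union_closed
    (h : ∃ P Q R : Set (Set W),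
      UnionClosed P ∧ UnionClosed Q ∧ UnionClosed R ∧
      (∅ : Set W) ∈ P ∧ (∅ : Set W) ∈ Q ∧ (∅ : Set W) ∈ R ∧
      ¬ (P ∩ TensorDisj Q R ⊆ TensorDisj (P ∩ Q) (P ∩ R))) :
    ¬ ∃ c : Set (Set W) → Set (Set W) → Set (Set W),
      (∀ P Q : Set (Set W), UnionClosed P → UnionClosed Q → UnionClosed (c P Q)) ∧
      (∀ P Q : Set (Set W), P ∩ c P Q ⊆ Q) ∧
      (∀ Γ P Q : Set (Set W), Γ ∩ P ⊆ Q → Γ ⊆ c P Q) := by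
  rintro ⟨c, hpres, hmp, hdt⟩
  obtain ⟨P, Q, R, hP, hQ, hR, heP, heQ, heR, hdist⟩ := h
  apply hdist
  set D := TensorDisj (P ∩ Q) (P ∩ R) with hD
  have hDuc : UnionClosed D := by
    rintro S T ⟨S₁, S₂, rfl, hS₁, hS₂⟩ ⟨T₁, T₂, rfl, hT₁, hT₂⟩
    refine ⟨S₁ ∪ T₁, S₂ ∪ T₂, by ac_rfl, ⟨hP _ _ hS₁.1 hT₁.1, hQ _ _ hS₁.2 hT₁.2⟩,
      ⟨hP _ _ hS₂.1 hT₂.1, hR _ _ hS₂.2 hT₂.2⟩⟩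
  have hcuc : UnionClosed (c P D) := hpres P D hP hDuc
  have hQc : Q ⊆ c P D := by
    apply hdt
    rintro T ⟨hTQ, hTP⟩
    exact ⟨T, ∅, by simp, ⟨hTP, hTQ⟩, ⟨heP, heR⟩⟩
  have hRc : R ⊆ c P D := by
    apply hdt
    rintro T ⟨hTR, hTP⟩
    exact ⟨∅, T, by simp, ⟨heP, heQ⟩, ⟨hTP, hTR⟩⟩
  rintro T ⟨hTP, T₁, T₂, rfl, hT₁, hT₂⟩
  exact hmp P D ⟨hTP, hcuc _ _ (hQc hT₁) (hRc hT₂)⟩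
end

section
/- Impossibility of a well-behaved conditional for intersection closed propositions: suppose W is a type admitting two teams S, T with S ∩ T ≠ S and S ∩ T ≠ T. Then there is no binary operation c sending pairs of intersection closed team propositions to intersection closed team propositions and satisfying Modus Ponens (P ∩ c(P,Q) ⊆ Q) and the Deduction Theorem (Γ ∩ P ⊆ Q implies Γ ⊆ c(P,Q)) for all intersection closed P, Q, Γ. -/
variable {W : Type*}

/-- P is intersection closed. -/
def InterClosed (P : Set (Set W)) : Prop := ∀ R U : Set W, R ∈ P → U ∈ P → R ∩ U ∈ P

lemma interClosed_singleton (S : Set W) : InterClosed {S} := by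
  intro R U hR hU
  simp_all [InterClosed]

lemma interClosed_empty : InterClosed (∅ : Set (Set W)) := by
  intro R U hR _; exact absurd hR (by simp)

/-- if W admits teams S, T with S ∩ T ≠ S and S ∩ T ≠ T, then there is no
intersection-closure-preserving conditional satisfying Modus Ponens and the Deduction
Theorem on intersection closed team propositions. -/
theorem no_wellbehaved_conditional_intersection_closed
    (h : ∃ S T : Set W, S ∩ T ≠ S ∧ S ∩ T ≠ T) :
    ¬ ∃ c : Set (Set W) → Set (Set W) → Set (Set W),
      (∀ P Q : Set (Set W), InterClosed P → InterClosed Q → InterClosed (c P Q)) ∧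
      (∀ P Q : Set (Set W), InterClosed P → InterClosed Q → P ∩ c P Q ⊆ Q) ∧
      (∀ Γ P Q : Set (Set W), InterClosed Γ → InterClosed P → InterClosed Q →
        Γ ∩ P ⊆ Q → Γ ⊆ c P Q) := by
  rintro ⟨c, hclosed, hmp, hded⟩
  obtain ⟨S, T, hS, hT⟩ := h
  set P : Set (Set W) := {S ∩ T}
  have hP : InterClosed P := interClosed_singleton _
  have hQ : InterClosed (∅ : Set (Set W)) := interClosed_empty
  -- S ∈ c P ∅
  have hSc : S ∈ c P ∅ := by
    refine hded {S} P ∅ (interClosed_singleton S) hP hQ ?_ rfl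
    rintro x ⟨hx1, hx2⟩
    simp only [Set.mem_singleton_iff, P] at hx1 hx2
    exact absurd (hx2 ▸ hx1) hS
  have hTc : T ∈ c P ∅ := by
    refine hded {T} P ∅ (interClosed_singleton T) hP hQ ?_ rfl
    rintro x ⟨hx1, hx2⟩
    simp only [Set.mem_singleton_iff, P] at hx1 hx2
    exact absurd (hx2 ▸ hx1) hT
  have hSTc : S ∩ T ∈ c P ∅ := hclosed P ∅ hP hQ S T hSc hTc
  exact hmp P ∅ hP hQ ⟨rfl, hSTc⟩
end

section
/- The tensor conjunction preserves intersection closure: if P and Q are intersection closed team propositions, then so is P ⊗ Q. -/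
/-- the tensor conjunction preserves intersection closure. -/
theorem tensor_conj_preserves_intersection_closure {W : Type*} (P Q : Set (Set W))
    (hP : ∀ R S : Set W, R ∈ P → S ∈ P → R ∩ S ∈ P)
    (hQ : ∀ R S : Set W, R ∈ Q → S ∈ Q → R ∩ S ∈ Q) :
    ∀ T₁ T₂ : Set W,
      T₁ ∈ {T : Set W | ∃ R S : Set W, T ⊆ R ∧ T ⊆ S ∧ T = R ∩ S ∧ R ∈ P ∧ S ∈ Q} →
      T₂ ∈ {T : Set W | ∃ R S : Set W, T ⊆ R ∧ T ⊆ S ∧ T = R ∩ S ∧ R ∈ P ∧ S ∈ Q} →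
      T₁ ∩ T₂ ∈ {T : Set W | ∃ R S : Set W, T ⊆ R ∧ T ⊆ S ∧ T = R ∩ S ∧ R ∈ P ∧ S ∈ Q} := by
  rintro T₁ T₂ ⟨R₁, S₁, h1, h2, rfl, hR1, hS1⟩ ⟨R₂, S₂, h3, h4, rfl, hR2, hS2⟩
  refine ⟨R₁ ∩ R₂, S₁ ∩ S₂, ?_, ?_, ?_, hP _ _ hR1 hR2, hQ _ _ hS1 hS2⟩ <;>
    first
      | ext x; simp; tauto
      | intro x hx; simp at hx ⊢; tauto
end

section
/- The epistemic counterfactual preserves convexity and intersection closure: if Q is a convex team proposition then P ↣ Q is convex for every team proposition P; and if Q is intersection closed then P ↣ Q is intersection closed. Moreover P ↣ Q is always downward closed. -/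
variable {W : Type*}

/-- The epistemic counterfactual. -/
def EpiCf (P Q : Set (Set W)) : Set (Set W) :=
  {T | ∀ S : Set W, S ⊆ T → (∀ U : Set W, U ⊆ S → U ∈ P) → S ∈ Q}

/-- the epistemic counterfactual preserves convexity and intersection
closure, and is always downward closed. -/
theorem epistemic_counterfactual_preservation :
    (∀ P Q : Set (Set W),
      (∀ S T R : Set W, S ∈ Q → T ∈ Q → S ⊆ R → R ⊆ T → R ∈ Q) →
      (∀ S T R : Set W, S ∈ EpiCf P Q → T ∈ EpiCf P Q → S ⊆ R → R ⊆ T →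
        R ∈ EpiCf P Q)) ∧
    (∀ P Q : Set (Set W),
      (∀ R S : Set W, R ∈ Q → S ∈ Q → R ∩ S ∈ Q) →
      (∀ R S : Set W, R ∈ EpiCf P Q → S ∈ EpiCf P Q → R ∩ S ∈ EpiCf P Q)) ∧
    (∀ P Q : Set (Set W), ∀ T ∈ EpiCf P Q, ∀ S : Set W, S ⊆ T → S ∈ EpiCf P Q) := by
  refine ⟨?_, ?_, ?_⟩
  · intro P Q _ S T R _ hT _ hRT S' hS'R hP
    exact hT S' (hS'R.trans hRT) hP
  · intro P Q _ R S hR _ S' hS' hP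
    exact hR S' (hS'.trans Set.inter_subset_left) hP
  · intro P Q T hT S hST S' hS' hP
    exact hT S' (hS'.trans hST) hP
end
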